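/- arXiv:1912.00922 — 10 statements merged into one kernel-verified Lean document; each statement's English description precedes it below -/
import Mathlib

section
/- If A is a nil-good ring, then the Laurent polynomial ring R = ⊕_{n∈ℤ} A·Xⁿ (with R₀ = A) is a ℤ-graded nil-good ring. -/
/-- A ring is *nil-good* if every element is either nilpotent or a sum of a unit
and a nilpotent. -/
def IsNilGood (R : Type*) [Ring R] : Prop :=
  ∀ a : R, IsNilpotent a ∨ ∃ u n : R, IsUnit u ∧ IsNilpotent n ∧ a = u + n

/-- A `G`-graded ring (given by the family of components `𝒜`) is *graded nil-good*
if every homogeneous element is either nilpotent or a sum of a homogeneous unit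
and a homogeneous nilpotent. -/
def IsGradedNilGood {G R : Type*} [Ring R] (𝒜 : G → AddSubgroup R) : Prop :=
  ∀ a : R, (∃ g, a ∈ 𝒜 g) →
    IsNilpotent a ∨
      ∃ u n : R, IsUnit u ∧ (∃ g, u ∈ 𝒜 g) ∧ IsNilpotent n ∧ (∃ g, n ∈ 𝒜 g) ∧ a = u + n

/-- The `n`-th component of the natural `ℤ`-grading of the Laurent polynomial ring
`A[T;T⁻¹]`: the monomials `a·Xⁿ`. -/
def laurentGrade (A : Type*) [Ring A] (n : ℤ) : AddSubgroup (LaurentPolynomial A) where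
  carrier := {x | ∃ a : A, x = LaurentPolynomial.C a * LaurentPolynomial.T n}
  add_mem' := by
    rintro x y ⟨a, rfl⟩ ⟨b, rfl⟩
    exact ⟨a + b, by rw [map_add, add_mul]⟩
  zero_mem' := ⟨0, by simp⟩
  neg_mem' := by
    rintro x ⟨a, rfl⟩
    exact ⟨-a, by rw [map_neg, neg_mul]⟩

/-! Since `T n` is a central unit, `C a * T n` is nilpotent when `a` is and a unit when `a` is, so
a nil-good decomposition `b = u + m` in `A` yields `C b * T n = C u * T n + C m * T n`. -/

open LaurentPolynomial

namespace LaurentPolynomial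

variable {A : Type*} [Semiring A]

theorem isNilpotent_C_mul_T {a : A} (ha : IsNilpotent a) (n : ℤ) :
    IsNilpotent (C a * T n) :=
  (commute_T n (C a)).symm.isNilpotent_mul_right (ha.map C)

theorem isUnit_C_mul_T {u : A} (hu : IsUnit u) (n : ℤ) : IsUnit (C u * T n) :=
  (hu.map C).mul (isUnit_T n)

end LaurentPolynomial

theorem C_mul_T_mem_laurentGrade {A : Type*} [Ring A] (a : A) (n : ℤ) :
    C a * T n ∈ laurentGrade A n :=
  ⟨a, rfl⟩

/-- If `A` is a nil-good ring, then the Laurent polynomial ring `⊕_{n ∈ ℤ} A·Xⁿ`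
(with `R₀ = A`) is a `ℤ`-graded nil-good ring. -/
theorem stmt0 (A : Type*) [Ring A] (hA : IsNilGood A) :
    IsGradedNilGood (laurentGrade A) := by
  rintro _ ⟨n, b, rfl⟩
  rcases hA b with hb | ⟨u, m, hu, hm, rfl⟩
  · exact .inl (isNilpotent_C_mul_T hb n)
  · refine .inr ⟨C u * T n, C m * T n, isUnit_C_mul_T hu n, ⟨n, C_mul_T_mem_laurentGrade u n⟩,
      isNilpotent_C_mul_T hm n, ⟨n, C_mul_T_mem_laurentGrade m n⟩, ?_⟩
    rw [map_add, add_mul]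
end

section
/- The ℤ-graded ring R = ⊕_{n∈ℤ} ℤ₂·Xⁿ (Laurent polynomials over ℤ₂) is graded nil-good but is not a nil-good ring; specifically, the element 1 + X is neither nilpotent nor a sum of a unit and a nilpotent. -/
/-!
In a commutative ring a unit plus a nilpotent is again a unit, so "nil-good" just says that every
element is nilpotent or a unit. Laurent polynomials over `ℤ₂` form a domain, so `1 + X ≠ 0` is not
nilpotent, and evaluating at `X = -1` sends `1 + X` to `0`, so it is not a unit either. A homogeneous
element `c Xⁿ` on the other hand is `0` or the unit `Xⁿ`, since `ℤ₂` is a field.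
-/

section NilGood

variable {R : Type*}

theorem exists_isUnit_add_isNilpotent_iff [CommRing R] (a : R) :
    (∃ u n : R, IsUnit u ∧ IsNilpotent n ∧ a = u + n) ↔ IsUnit a := by
  constructor
  · rintro ⟨u, n, hu, hn, rfl⟩
    exact hn.isUnit_add_left_of_commute hu (Commute.all _ _)
  · exact fun ha => ⟨a, 0, ha, IsNilpotent.zero, (add_zero a).symm⟩

theorem isNilGood_iff [CommRing R] : IsNilGood R ↔ ∀ a : R, IsNilpotent a ∨ IsUnit a := by
  simp only [IsNilGood, exists_isUnit_add_isNilpotent_iff]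

theorem isNilGood_of_divisionRing [DivisionRing R] : IsNilGood R := by
  intro a
  rcases eq_or_ne a 0 with rfl | ha
  · exact Or.inl IsNilpotent.zero
  · exact Or.inr ⟨a, 0, ha.isUnit, IsNilpotent.zero, (add_zero a).symm⟩

end NilGood

namespace LaurentPolynomial

variable {A : Type*}

theorem isGradedNilGood_laurentGrade [Ring A] (hA : IsNilGood A) :
    IsGradedNilGood (laurentGrade A) := by
  rintro _ ⟨g, c, rfl⟩
  rcases hA c with hc | ⟨u, n, hu, hn, rfl⟩
  · exact Or.inl ((commute_T g (C c)).symm.isNilpotent_mul_right (hc.map C))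
  · refine Or.inr ⟨C u * T g, C n * T g, (hu.map C).mul (isUnit_T g), ⟨g, u, rfl⟩,
      (commute_T g (C n)).symm.isNilpotent_mul_right (hn.map C), ⟨g, n, rfl⟩, ?_⟩
    rw [map_add, add_mul]

theorem one_add_T_ne_zero [Semiring A] [Nontrivial A] : (1 + T 1 : A[T;T⁻¹]) ≠ 0 := by
  intro h
  simpa [← T_zero] using congrArg (fun f => f.coeff 1) h

theorem not_isNilpotent_one_add_T [Ring A] [NoZeroDivisors A] [Nontrivial A] :
    ¬ IsNilpotent (1 + T 1 : A[T;T⁻¹]) :=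
  fun h => one_add_T_ne_zero h.eq_zero

theorem not_isUnit_one_add_T [CommRing A] [Nontrivial A] : ¬ IsUnit (1 + T 1 : A[T;T⁻¹]) := by
  intro h
  have h0 : eval₂ (RingHom.id A) (-1) (1 + T 1) = 0 := by simp [eval₂_T]
  exact not_isUnit_zero (h0 ▸ h.map (eval₂ (RingHom.id A) (-1)))

end LaurentPolynomial

/-- The Laurent polynomial ring over `ℤ₂` is graded nil-good but is not a nil-good
ring: the element `1 + X` is neither nilpotent nor a sum of a unit and a nilpotent. -/
theorem stmt2 :
    IsGradedNilGood (laurentGrade (ZMod 2)) ∧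
    ¬ IsNilGood (LaurentPolynomial (ZMod 2)) ∧
    ¬ IsNilpotent (1 + LaurentPolynomial.T 1 : LaurentPolynomial (ZMod 2)) ∧
    ¬ ∃ u n : LaurentPolynomial (ZMod 2), IsUnit u ∧ IsNilpotent n ∧
        1 + LaurentPolynomial.T 1 = u + n := by
  have h_not_nil := LaurentPolynomial.not_isNilpotent_one_add_T (A := ZMod 2)
  have h_not_unit := LaurentPolynomial.not_isUnit_one_add_T (A := ZMod 2)
  rw [isNilGood_iff, exists_isUnit_add_isNilpotent_iff]
  exact ⟨LaurentPolynomial.isGradedNilGood_laurentGrade isNilGood_of_divisionRing,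
    fun h => (h _).elim h_not_nil h_not_unit, h_not_nil, h_not_unit⟩
end

section
/- The 2×2 matrix ring M₂(ℤ₂), graded by the cyclic group G = {e, g} of order 2 with M₂(ℤ₂)_e the diagonal matrices and M₂(ℤ₂)_g the antidiagonal matrices, is a nil-good ring but is not graded nil-good: the homogeneous element diag(1,0) is neither nilpotent nor a sum of a homogeneous unit and a homogeneous nilpotent. -/
/-- The even (diagonal) part of `M₂(ℤ₂)`. -/
def evenPart : AddSubgroup (Matrix (Fin 2) (Fin 2) (ZMod 2)) where
  carrier := {M | M 0 1 = 0 ∧ M 1 0 = 0}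
  add_mem' := by
    rintro x y ⟨hx1, hx2⟩ ⟨hy1, hy2⟩
    exact ⟨by simp [Matrix.add_apply, hx1, hy1], by simp [Matrix.add_apply, hx2, hy2]⟩
  zero_mem' := ⟨rfl, rfl⟩
  neg_mem' := by
    rintro x ⟨hx1, hx2⟩
    exact ⟨by simp [Matrix.neg_apply, hx1], by simp [Matrix.neg_apply, hx2]⟩

/-- The odd (antidiagonal) part of `M₂(ℤ₂)`. -/
def oddPart : AddSubgroup (Matrix (Fin 2) (Fin 2) (ZMod 2)) where
  carrier := {M | M 0 0 = 0 ∧ M 1 1 = 0}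
  add_mem' := by
    rintro x y ⟨hx1, hx2⟩ ⟨hy1, hy2⟩
    exact ⟨by simp [Matrix.add_apply, hx1, hy1], by simp [Matrix.add_apply, hx2, hy2]⟩
  zero_mem' := ⟨rfl, rfl⟩
  neg_mem' := by
    rintro x ⟨hx1, hx2⟩
    exact ⟨by simp [Matrix.neg_apply, hx1], by simp [Matrix.neg_apply, hx2]⟩

/-- The `ℤ/2`-grading of `M₂(ℤ₂)`: even component the diagonal matrices, odd
component the antidiagonal matrices. -/
def mgrade : ZMod 2 → AddSubgroup (Matrix (Fin 2) (Fin 2) (ZMod 2)) :=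
  fun g => if g = 0 then evenPart else oddPart

/-!
A diagonal nilpotent matrix over a reduced ring is zero. If `diag(1,0) = u + n` with `u` and `n`
homogeneous, comparing entries forces `n` to be diagonal, so the nilpotent `n` vanishes and the
idempotent `diag(1,0)` would be a unit, hence `1`. Nil-goodness of `M₂(𝔽₂)` itself is a finite
check over its sixteen elements; for instance `diag(1,0) = !![0,1;1,1] + !![1,1;1,1]`.
-/

open Matrix

theorem Matrix.IsDiag.eq_zero_of_isNilpotent {n R : Type*} [Fintype n] [DecidableEq n]
    [Semiring R] [IsReduced R] {A : Matrix n n R} (hA : A.IsDiag) (hnil : IsNilpotent A) :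
    A = 0 := by
  rw [← hA.diagonal_diag] at hnil ⊢
  have hdiag : IsNilpotent A.diag :=
    (IsNilpotent.map_iff (f := diagonalRingHom n R) diagonal_injective).mp hnil
  rw [hdiag.eq_zero]
  exact diagonal_zero

theorem Matrix.isIdempotentElem_diagonal_one_zero {R : Type*} [Semiring R] :
    IsIdempotentElem (diagonal ![1, 0] : Matrix (Fin 2) (Fin 2) R) := by
  rw [IsIdempotentElem, diagonal_mul_diagonal]
  congr 1
  ext i
  fin_cases i <;> simp

lemma isDiag_of_mem_evenPart {M : Matrix (Fin 2) (Fin 2) (ZMod 2)} (h : M ∈ evenPart) :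
    M.IsDiag := by
  obtain ⟨h₀₁, h₁₀⟩ := h
  intro i j hij
  fin_cases i <;> fin_cases j <;> simp_all

lemma mem_evenPart_or_mem_oddPart_of_mem_mgrade {M : Matrix (Fin 2) (Fin 2) (ZMod 2)}
    {g : ZMod 2} (h : M ∈ mgrade g) : M ∈ evenPart ∨ M ∈ oddPart := by
  unfold mgrade at h
  split_ifs at h
  exacts [Or.inl h, Or.inr h]

lemma mem_evenPart_of_diagonal_one_zero_eq_add {u n : Matrix (Fin 2) (Fin 2) (ZMod 2)}
    (hu : u ∈ evenPart ∨ u ∈ oddPart) (hn : n ∈ evenPart ∨ n ∈ oddPart)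
    (h : diagonal ![1, 0] = u + n) : n ∈ evenPart := by
  have entry (i j : Fin 2) : diagonal ![1, 0] i j = u i j + n i j := by rw [h, Matrix.add_apply]
  rcases hn with hn | ⟨hn₀₀, -⟩
  · exact hn
  rcases hu with ⟨hu₀₁, hu₁₀⟩ | ⟨hu₀₀, -⟩
  · exact ⟨by simpa [hu₀₁] using (entry 0 1).symm, by simpa [hu₁₀] using (entry 1 0).symm⟩
  · simpa [hu₀₀, hn₀₀] using entry 0 0

theorem isNilGood_matrix_fin_two_zmod_two : IsNilGood (Matrix (Fin 2) (Fin 2) (ZMod 2)) := by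
  have key : ∀ a : Matrix (Fin 2) (Fin 2) (ZMod 2),
      a ^ 2 = 0 ∨ ∃ u : (Matrix (Fin 2) (Fin 2) (ZMod 2))ˣ, (a - u) ^ 2 = 0 := by
    decide
  intro a
  rcases key a with ha | ⟨u, hu⟩
  · exact Or.inl ⟨2, ha⟩
  · exact Or.inr ⟨u, a - u, u.isUnit, ⟨2, hu⟩, (add_sub_cancel _ _).symm⟩

theorem diagonal_one_zero_ne_homogeneous_unit_add_nilpotent :
    ¬ ∃ u n : Matrix (Fin 2) (Fin 2) (ZMod 2), IsUnit u ∧ (∃ g, u ∈ mgrade g) ∧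
        IsNilpotent n ∧ (∃ g, n ∈ mgrade g) ∧ diagonal ![1, 0] = u + n := by
  rintro ⟨u, n, hu, ⟨g, hug⟩, hn, ⟨g', hng⟩, h⟩
  have hn_even : n ∈ evenPart :=
    mem_evenPart_of_diagonal_one_zero_eq_add (mem_evenPart_or_mem_oddPart_of_mem_mgrade hug)
      (mem_evenPart_or_mem_oddPart_of_mem_mgrade hng) h
  rw [(isDiag_of_mem_evenPart hn_even).eq_zero_of_isNilpotent hn, add_zero] at h
  have h_one : (diagonal ![1, 0] : Matrix (Fin 2) (Fin 2) (ZMod 2)) = 1 :=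
    (IsIdempotentElem.iff_eq_one_of_isUnit (h ▸ hu)).mp isIdempotentElem_diagonal_one_zero
  exact absurd h_one (by decide)

/-- `M₂(ℤ₂)` graded by `ℤ/2` via diagonal/antidiagonal matrices is a nil-good ring
but is not graded nil-good: `diag(1,0)` is a homogeneous element which is neither
nilpotent nor a sum of a homogeneous unit and a homogeneous nilpotent. -/
theorem stmt3 :
    IsNilGood (Matrix (Fin 2) (Fin 2) (ZMod 2)) ∧
    (Matrix.diagonal ![1, 0] ∈ mgrade 0) ∧
    ¬ IsNilpotent (Matrix.diagonal ![1, 0] : Matrix (Fin 2) (Fin 2) (ZMod 2)) ∧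
    (¬ ∃ u n : Matrix (Fin 2) (Fin 2) (ZMod 2), IsUnit u ∧ (∃ g, u ∈ mgrade g) ∧
        IsNilpotent n ∧ (∃ g, n ∈ mgrade g) ∧ Matrix.diagonal ![1, 0] = u + n) ∧
    ¬ IsGradedNilGood mgrade := by
  have hmem : (diagonal ![1, 0] : Matrix (Fin 2) (Fin 2) (ZMod 2)) ∈ mgrade 0 := ⟨rfl, rfl⟩
  have hnotnil : ¬ IsNilpotent (diagonal ![1, 0] : Matrix (Fin 2) (Fin 2) (ZMod 2)) :=
    fun h => absurd (isIdempotentElem_diagonal_one_zero.eq_zero_of_isNilpotent h) (by decide)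
  refine ⟨isNilGood_matrix_fin_two_zmod_two, hmem, hnotnil,
    diagonal_one_zero_ne_homogeneous_unit_add_nilpotent, fun hgood => ?_⟩
  exact (hgood _ ⟨0, hmem⟩).elim hnotnil diagonal_one_zero_ne_homogeneous_unit_add_nilpotent
end

section
/- If R = ⊕_{g∈G} R_g is a G-graded nil-good ring, then the identity component R_e is a nil-good ring. -/
open DirectSum

namespace SetLike.GradeZero

variable {ι R σ : Type*} [AddMonoid ι] [DecidableEq ι] [Ring R] [SetLike σ R]
  [AddSubgroupClass σ R] (𝒜 : ι → σ) [GradedRing 𝒜]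

theorem isNilpotent_coe_iff {x : 𝒜 0} : IsNilpotent (x : R) ↔ IsNilpotent x :=
  IsNilpotent.map_iff (f := (subring 𝒜).subtype) Subtype.val_injective

theorem isUnit_coe_iff {x : 𝒜 0} : IsUnit (x : R) ↔ IsUnit x := by
  refine ⟨fun hx => ?_, fun hx => hx.map (subring 𝒜).subtype⟩
  obtain ⟨u, hu⟩ := hx
  refine isUnit_iff_exists.mpr ⟨decompose 𝒜 (↑u⁻¹ : R) 0, Subtype.ext ?_, Subtype.ext ?_⟩
  · change (x : R) * decompose 𝒜 (↑u⁻¹ : R) 0 = 1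
    rw [← coe_decompose_mul_of_left_mem_zero 𝒜 x.2, ← hu, Units.mul_inv,
      decompose_of_mem_same 𝒜 (one_mem_graded 𝒜)]
  · change (decompose 𝒜 (↑u⁻¹ : R) 0 : R) * x = 1
    rw [← coe_decompose_mul_of_right_mem_zero 𝒜 x.2, ← hu, Units.inv_mul,
      decompose_of_mem_same 𝒜 (one_mem_graded 𝒜)]

end SetLike.GradeZero

namespace DirectSum

variable {ι R σ : Type*} [AddMonoid ι] [DecidableEq ι] [Ring R] [SetLike σ R]
  [AddSubgroupClass σ R] (𝒜 : ι → σ) [GradedRing 𝒜]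

theorem coe_decompose_zero_of_mem {x : R} {i : ι} (hx : x ∈ 𝒜 i) :
    (decompose 𝒜 x 0 : R) = if i = 0 then x else 0 := by
  split_ifs with hi
  · exact decompose_of_mem_same 𝒜 (hi ▸ hx)
  · exact decompose_of_mem_ne 𝒜 hx hi

theorem isNilpotent_decompose_zero_of_mem {x : R} {i : ι} (hx : x ∈ 𝒜 i)
    (hnil : IsNilpotent x) : IsNilpotent (decompose 𝒜 x 0) := by
  rw [← SetLike.GradeZero.isNilpotent_coe_iff, coe_decompose_zero_of_mem 𝒜 hx]
  split_ifs
  exacts [hnil, IsNilpotent.zero]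

end DirectSum

/-- If `R = ⊕_{g ∈ G} R_g` is a `G`-graded nil-good ring, then the identity
component `R_e` is a nil-good ring. -/
theorem stmt4 {G R : Type*} [AddGroup G] [DecidableEq G] [Ring R]
    (𝒜 : G → AddSubgroup R) [GradedRing 𝒜]
    (h : IsGradedNilGood 𝒜) :
    IsNilGood (𝒜 0) := by
  intro a
  rcases h a ⟨0, a.2⟩ with ha | ⟨u, n, hu, ⟨g, hug⟩, hn, ⟨g', hng⟩, hau⟩
  · exact .inl ((SetLike.GradeZero.isNilpotent_coe_iff 𝒜).mp ha)
  have hn₀ := isNilpotent_decompose_zero_of_mem 𝒜 hng hn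
  have hsplit : (a : R) = decompose 𝒜 u 0 + decompose 𝒜 n 0 := by
    rw [← decompose_of_mem_same 𝒜 a.2, hau, decompose_add]
    rfl
  rw [coe_decompose_zero_of_mem 𝒜 hug] at hsplit
  split_ifs at hsplit with hg
  · subst hg
    exact .inr ⟨⟨u, hug⟩, _, (SetLike.GradeZero.isUnit_coe_iff 𝒜).mp hu, hn₀, Subtype.ext hsplit⟩
  · rw [zero_add] at hsplit
    exact .inl (Subtype.ext hsplit ▸ hn₀)
end

section
/- Let R be a G-graded ring and I a two-sided homogeneous ideal of R that is graded-nil (every homogeneous element of I is nilpotent). Then R is graded nil-good if and only if R/I is graded nil-good. -/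
theorem isUnit_of_isUnit_mul_of_isUnit_mul {M : Type*} [Monoid M] {a b : M}
    (hab : IsUnit (a * b)) (hba : IsUnit (b * a)) : IsUnit a := by
  obtain ⟨c, hc⟩ := hab
  obtain ⟨d, hd⟩ := hba
  refine isUnit_iff_exists_and_exists.2 ⟨⟨b * ↑c⁻¹, ?_⟩, ⟨↑d⁻¹ * b, ?_⟩⟩
  · rw [← mul_assoc, ← hc, c.mul_inv]
  · rw [mul_assoc, ← hd, d.inv_mul]

theorem IsGradedNilGood.map {G R S : Type*} [Ring R] [Ring S] {𝒜 : G → AddSubgroup R}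
    (h : IsGradedNilGood 𝒜) (f : R →+* S) :
    IsGradedNilGood fun g => (𝒜 g).map f.toAddMonoidHom := by
  rintro _ ⟨g, hx⟩
  obtain ⟨a, ha, rfl⟩ := AddSubgroup.mem_map.1 hx
  rcases h a ⟨g, ha⟩ with hna | ⟨u, n, hu, ⟨gu, hgu⟩, hn, ⟨gn, hgn⟩, rfl⟩
  · exact .inl (hna.map f)
  · exact .inr ⟨f u, f n, hu.map f, ⟨gu, AddSubgroup.mem_map_of_mem _ hgu⟩,
      hn.map f, ⟨gn, AddSubgroup.mem_map_of_mem _ hgn⟩, map_add f u n⟩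

namespace TwoSidedIdeal

variable {R : Type*} [Ring R] (I : TwoSidedIdeal R)

theorem ringCon_mk'_eq_zero_iff {a : R} : I.ringCon.mk' a = 0 ↔ a ∈ I := by
  rw [← mem_ker, ker_ringCon_mk']

section GradedMonoid

variable {G : Type*} [AddMonoid G] [DecidableEq G] (𝒜 : G → AddSubgroup R) [GradedRing 𝒜]

theorem isNilpotent_of_isNilpotent_ringCon_mk'
    (hnil : ∀ a ∈ I, (∃ g, a ∈ 𝒜 g) → IsNilpotent a) {a : R} {g : G} (ha : a ∈ 𝒜 g)
    (h : IsNilpotent (I.ringCon.mk' a)) : IsNilpotent a := by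
  obtain ⟨k, hk⟩ := h
  have hmem : a ^ k ∈ I := I.ringCon_mk'_eq_zero_iff.1 (by rwa [map_pow])
  exact (hnil _ hmem ⟨k • g, SetLike.pow_mem_graded k ha⟩).of_pow

theorem mem_or_mem_of_add_sub_mem
    (hhom : ∀ a ∈ I, ∀ g : G, (DirectSum.decompose 𝒜 a g : R) ∈ I)
    {a u n : R} {g g₁ g₂ : G} (ha : a ∈ 𝒜 g) (hu : u ∈ 𝒜 g₁) (hn : n ∈ 𝒜 g₂) (hne : g ≠ g₁)
    (h : u + n - a ∈ I) : u ∈ I ∨ a ∈ I := by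
  have hcomp := hhom _ h g₁
  rw [DirectSum.decompose_sub, DirectSum.decompose_add, DFinsupp.sub_apply, DFinsupp.add_apply,
    AddSubgroupClass.coe_sub, AddSubgroup.coe_add, DirectSum.decompose_of_mem_same 𝒜 hu,
    DirectSum.decompose_of_mem_ne 𝒜 ha hne, sub_zero] at hcomp
  by_cases hg : g₂ = g₁
  · subst hg
    rw [DirectSum.decompose_of_mem_same 𝒜 hn] at hcomp
    exact .inr (by simpa using I.sub_mem hcomp h)
  · rw [DirectSum.decompose_of_mem_ne 𝒜 hn hg, add_zero] at hcomp
    exact .inl hcomp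

theorem mem_of_ringCon_mk'_eq_add
    (hhom : ∀ a ∈ I, ∀ g : G, (DirectSum.decompose 𝒜 a g : R) ∈ I)
    {a u n : R} {g g₁ g₂ : G} (ha : a ∈ 𝒜 g) (hu : u ∈ 𝒜 g₁) (hn : n ∈ 𝒜 g₂) (hne : g ≠ g₁)
    (hπu : IsUnit (I.ringCon.mk' u))
    (heq : I.ringCon.mk' a = I.ringCon.mk' u + I.ringCon.mk' n) :     a ∈ I := by
  have hsum : u + n - a ∈ I :=
    I.ringCon_mk'_eq_zero_iff.1 (by rw [map_sub, map_add, heq, sub_self])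
  rcases I.mem_or_mem_of_add_sub_mem 𝒜 hhom ha hu hn hne hsum with huI | haI
  · -- `I.ringCon.mk' u` is both a unit and zero, so the quotient is trivial
    rw [I.ringCon_mk'_eq_zero_iff.2 huI, isUnit_zero_iff] at hπu
    exact I.ringCon_mk'_eq_zero_iff.1 (by rw [← mul_one (I.ringCon.mk' a), ← hπu, mul_zero])
  · exact haI

end GradedMonoid

section GradedGroup

variable {G : Type*} [AddGroup G] [DecidableEq G] (𝒜 : G → AddSubgroup R) [GradedRing 𝒜]

theorem coe_decompose_zero_sub_one_mem
    (hhom : ∀ a ∈ I, ∀ g : G, (DirectSum.decompose 𝒜 a g : R) ∈ I)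
    {x : R} (hx : I.ringCon.mk' x = 1) : (DirectSum.decompose 𝒜 x 0 : R) - 1 ∈ I := by
  have hx1 : x - 1 ∈ I := I.ringCon_mk'_eq_zero_iff.1 (by rw [map_sub, hx, map_one, sub_self])
  have := hhom _ hx1 0
  rwa [DirectSum.decompose_sub, DFinsupp.sub_apply, AddSubgroupClass.coe_sub,
    DirectSum.decompose_of_mem_same 𝒜 SetLike.GradedOne.one_mem] at this

theorem exists_homogeneous_inverse_mod
    (hhom : ∀ a ∈ I, ∀ g : G, (DirectSum.decompose 𝒜 a g : R) ∈ I)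
    {u : R} {g : G} (hu : u ∈ 𝒜 g) (h : IsUnit (I.ringCon.mk' u)) :
    ∃ w ∈ 𝒜 (-g), u * w - 1 ∈ I ∧ w * u - 1 ∈ I := by
  obtain ⟨U, hU⟩ := h
  obtain ⟨v, hv⟩ := RingCon.mk'_surjective (c := I.ringCon) ↑U⁻¹
  refine ⟨DirectSum.decompose 𝒜 v (-g), SetLike.coe_mem _, ?_, ?_⟩
  · have := I.coe_decompose_zero_sub_one_mem 𝒜 hhom (x := u * v)
      (by rw [map_mul, hv, ← hU, U.mul_inv])
    rwa [← add_neg_cancel g, DirectSum.coe_decompose_mul_add_of_left_mem 𝒜 hu] at this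
  · have := I.coe_decompose_zero_sub_one_mem 𝒜 hhom (x := v * u)
      (by rw [map_mul, hv, ← hU, U.inv_mul])
    rwa [← neg_add_cancel g, DirectSum.coe_decompose_mul_add_of_right_mem 𝒜 hu] at this

theorem isUnit_of_sub_one_mem (hnil : ∀ a ∈ I, (∃ g, a ∈ 𝒜 g) → IsNilpotent a)
    {x : R} (hx : x ∈ 𝒜 0) (hxI : x - 1 ∈ I) : IsUnit x := by
  simpa using (hnil _ hxI ⟨0, _root_.sub_mem hx SetLike.GradedOne.one_mem⟩).isUnit_add_one

theorem isUnit_of_isUnit_ringCon_mk'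
    (hhom : ∀ a ∈ I, ∀ g : G, (DirectSum.decompose 𝒜 a g : R) ∈ I)
    (hnil : ∀ a ∈ I, (∃ g, a ∈ 𝒜 g) → IsNilpotent a)
    {u : R} {g : G} (hu : u ∈ 𝒜 g) (h : IsUnit (I.ringCon.mk' u)) : IsUnit u := by
  obtain ⟨w, hw, huw, hwu⟩ := I.exists_homogeneous_inverse_mod 𝒜 hhom hu h
  exact isUnit_of_isUnit_mul_of_isUnit_mul
    (I.isUnit_of_sub_one_mem 𝒜 hnil (add_neg_cancel g ▸ SetLike.mul_mem_graded hu hw) huw)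
    (I.isUnit_of_sub_one_mem 𝒜 hnil (neg_add_cancel g ▸ SetLike.mul_mem_graded hw hu) hwu)

theorem isGradedNilGood_of_quotient
    (hhom : ∀ a ∈ I, ∀ g : G, (DirectSum.decompose 𝒜 a g : R) ∈ I)
    (hnil : ∀ a ∈ I, (∃ g, a ∈ 𝒜 g) → IsNilpotent a)
    (h : IsGradedNilGood fun g => (𝒜 g).map I.ringCon.mk'.toAddMonoidHom) :
    IsGradedNilGood 𝒜 := by
  set π := I.ringCon.mk'
  rintro a ⟨g, ha⟩
  rcases h (π a) ⟨g, AddSubgroup.mem_map_of_mem _ ha⟩ with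
    hna | ⟨_, _, hπu, ⟨g₁, hu₁⟩, hπn, ⟨g₂, hn₂⟩, heq⟩
  · exact .inl (I.isNilpotent_of_isNilpotent_ringCon_mk' 𝒜 hnil ha hna)
  obtain ⟨u, hu, rfl⟩ := AddSubgroup.mem_map.1 hu₁
  obtain ⟨n, hn, rfl⟩ := AddSubgroup.mem_map.1 hn₂
  change IsUnit (π u) at hπu
  change IsNilpotent (π n) at hπn
  change π a = π u + π n at heq
  by_cases hg : g = g₁
  · subst hg
    have hau : a - u ∈ 𝒜 g := _root_.sub_mem ha hu
    have hπau : π (a - u) = π n := by rw [map_sub, heq, add_sub_cancel_left]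
    exact .inr ⟨u, a - u, I.isUnit_of_isUnit_ringCon_mk' 𝒜 hhom hnil hu hπu, ⟨g, hu⟩,
      I.isNilpotent_of_isNilpotent_ringCon_mk' 𝒜 hnil hau (hπau ▸ hπn), ⟨g, hau⟩,
      (add_sub_cancel u a).symm⟩
  · exact .inl (hnil a (I.mem_of_ringCon_mk'_eq_add 𝒜 hhom ha hu hn hg hπu heq) ⟨g, ha⟩)

end GradedGroup

end TwoSidedIdeal

/-- Let `I` be a two-sided homogeneous ideal of a `G`-graded ring `R` that is
graded-nil (every homogeneous element of `I` is nilpotent). Then `R` is graded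
nil-good if and only if `R/I` is graded nil-good with the induced grading. -/
theorem stmt8 {G R : Type*} [AddGroup G] [DecidableEq G] [Ring R]
    (𝒜 : G → AddSubgroup R) [GradedRing 𝒜]
    (I : TwoSidedIdeal R)
    (hhom : ∀ a ∈ I, ∀ g : G, (DirectSum.decompose 𝒜 a g : R) ∈ I)
    (hnil : ∀ a ∈ I, (∃ g, a ∈ 𝒜 g) → IsNilpotent a) :
    IsGradedNilGood 𝒜 ↔
      IsGradedNilGood
        (fun g => (𝒜 g).map (RingCon.mk' I.ringCon).toAddMonoidHom) :=
  ⟨fun h => h.map _, I.isGradedNilGood_of_quotient 𝒜 hhom hnil⟩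
end

section
/- Let R = ⊕_{g∈G} R_g be a G-graded nil-good ring with finite support (R_g = 0 for all but finitely many g). Then the graded Jacobson radical J^g(R) is a graded-nil ideal, i.e., every homogeneous element of J^g(R) is nilpotent. -/
/-- A graded-maximal ideal: a proper homogeneous ideal maximal among proper
homogeneous ideals. -/
def IsGradedMaximal {G R : Type*} [AddGroup G] [DecidableEq G] [Ring R]
    (𝒜 : G → AddSubgroup R) [GradedRing 𝒜] (I : Ideal R) : Prop :=
  Ideal.IsHomogeneous 𝒜 I ∧ I ≠ ⊤ ∧
    ∀ J : Ideal R, Ideal.IsHomogeneous 𝒜 J → J ≠ ⊤ → I ≤ J → J = I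

/-- The graded Jacobson radical: the intersection of all graded-maximal ideals. -/
def gradedJacobson {G R : Type*} [AddGroup G] [DecidableEq G] [Ring R]
    (𝒜 : G → AddSubgroup R) [GradedRing 𝒜] : Ideal R :=
  sInf {I : Ideal R | IsGradedMaximal 𝒜 I}

/-!
Write a homogeneous `a ∈ J^g(R)` that is not nilpotent as `a = u + n` with `u` a homogeneous unit
and `n` a homogeneous nilpotent. Since `u⁻¹` is again homogeneous, `1 - u⁻¹ a = -u⁻¹ n` is
homogeneous, so it lies in no graded-maximal ideal (these contain `u⁻¹ a`), and the homogeneous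
left ideal it generates is all of `R`. Thus `n` has a left inverse; being nilpotent, this forces
`R = 0`.
-/

theorem IsNilpotent.subsingleton_of_mul_eq_one {R : Type*} [MonoidWithZero R] {w n : R}
    (hn : IsNilpotent n) (h : w * n = 1) : Subsingleton R := by
  obtain ⟨m, hm⟩ := hn
  have hreg : IsLeftRegular n := IsLeftRegular.of_mul (a := w) (h ▸ isRegular_one.left)
  exact isLeftRegular_zero_iff_subsingleton.mp (hm ▸ hreg.pow m)

section Graded

variable {ι σ A : Type*} [DecidableEq ι]

theorem Units.inv_mem_graded [AddGroup ι] [Semiring A] [SetLike σ A] [AddSubmonoidClass σ A]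
    (𝒜 : ι → σ) [GradedRing 𝒜] {u : Aˣ} {i : ι} (hu : (u : A) ∈ 𝒜 i) :
    ((u⁻¹ : Aˣ) : A) ∈ 𝒜 (-i) := by
  set w : A := (DirectSum.decompose 𝒜 ((u⁻¹ : Aˣ) : A) (-i) : A)
  have huw : (u : A) * w = 1 := by
    rw [← DirectSum.coe_decompose_mul_add_of_left_mem 𝒜 hu, u.mul_inv, add_neg_cancel,
      DirectSum.decompose_of_mem_same 𝒜 (SetLike.one_mem_graded 𝒜)]
  have hw : ((u⁻¹ : Aˣ) : A) = w := by
    rw [← one_mul w, ← u.inv_mul, mul_assoc, huw, mul_one]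
  exact hw ▸ SetLike.coe_mem _

variable [AddMonoid ι] [Semiring A] [SetLike σ A] [AddSubmonoidClass σ A] {𝒜 : ι → σ}
  [GradedRing 𝒜]

theorem HomogeneousIdeal.isCompactElement_top :
    IsCompactElement (⊤ : HomogeneousIdeal 𝒜) := by
  rw [CompleteLattice.isCompactElement_iff_le_of_directed_sSup_le]
  intro s hne hdir htop
  have hsup : sSup (toIdeal '' s) = ⊤ := by
    rw [sSup_image, ← toIdeal_sSup, top_le_iff.mp htop, toIdeal_top]
  obtain ⟨_, ⟨I, hIs, rfl⟩, hI⟩ :=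
    (CompleteLattice.isCompactElement_iff_le_of_directed_sSup_le _ _).mp Ideal.isCompactElement_top
      (toIdeal '' s) (hne.image _) (hdir.mono_comp fun _ _ h => h) hsup.ge
  exact ⟨I, hIs, (eq_top_iff I).mpr (top_le_iff.mp hI) |>.ge⟩

instance HomogeneousIdeal.isCoatomic : IsCoatomic (HomogeneousIdeal 𝒜) :=
  CompleteLattice.coatomic_of_top_compact isCompactElement_top

end Graded

section GradedJacobson

variable {G R : Type*} [AddGroup G] [DecidableEq G] [Ring R] {𝒜 : G → AddSubgroup R}
  [GradedRing 𝒜]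

theorem isGradedMaximal_toIdeal_of_isCoatom {M : HomogeneousIdeal 𝒜} (hM : IsCoatom M) :
    IsGradedMaximal 𝒜 (HomogeneousIdeal.toIdeal M) := by
  refine ⟨M.isHomogeneous, fun h => hM.1 ((HomogeneousIdeal.eq_top_iff M).mpr h), ?_⟩
  intro J hJ hJtop hMJ
  have hne : (⟨J, hJ⟩ : HomogeneousIdeal 𝒜) ≠ ⊤ :=
    fun h => hJtop ((HomogeneousIdeal.eq_top_iff _).mp h)
  exact congrArg HomogeneousIdeal.toIdeal ((hM.le_iff_eq hne).mp hMJ)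

theorem exists_isGradedMaximal_le {I : Ideal R} (hI : I.IsHomogeneous 𝒜) (hItop : I ≠ ⊤) :
    ∃ M, IsGradedMaximal 𝒜 M ∧ I ≤ M := by
  obtain h | ⟨M, hM, hIM⟩ := eq_top_or_exists_le_coatom (⟨I, hI⟩ : HomogeneousIdeal 𝒜)
  · exact absurd ((HomogeneousIdeal.eq_top_iff _).mp h) hItop
  · exact ⟨HomogeneousIdeal.toIdeal M, isGradedMaximal_toIdeal_of_isCoatom hM, hIM⟩

theorem exists_mul_one_sub_eq_one_of_mem_gradedJacobson {x : R} (hx : x ∈ gradedJacobson 𝒜)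
    {i : G} (hi : 1 - x ∈ 𝒜 i) : ∃ r, r * (1 - x) = 1 := by
  rw [← Ideal.mem_span_singleton', ← Ideal.eq_top_iff_one]
  by_contra hne
  have hhom : (Ideal.span {1 - x}).IsHomogeneous 𝒜 :=
    Ideal.homogeneous_span 𝒜 _ (by rintro _ rfl; exact ⟨i, hi⟩)
  obtain ⟨M, hM, hle⟩ := exists_isGradedMaximal_le hhom hne
  have hxM : x ∈ M := sInf_le (α := Ideal R) hM hx
  have h1M : 1 - x ∈ M := hle (Ideal.subset_span rfl)
  exact hM.2.1 ((Ideal.eq_top_iff_one M).mpr (by simpa using M.add_mem hxM h1M))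

end GradedJacobson

theorem stmt9_general {G R : Type*} [AddGroup G] [DecidableEq G] [Ring R]
    (𝒜 : G → AddSubgroup R) [GradedRing 𝒜]
    (hR : IsGradedNilGood 𝒜) :
    ∀ a ∈ gradedJacobson 𝒜, (∃ g, a ∈ 𝒜 g) → IsNilpotent a := by
  intro a ha hhom
  obtain hnil | ⟨u, n, hu, ⟨i, hui⟩, hn, ⟨j, hnj⟩, rfl⟩ := hR a hhom
  · exact hnil
  obtain ⟨U, rfl⟩ := hu
  have hsub : 1 - ↑U⁻¹ * (↑U + n) = -(↑U⁻¹ * n) := by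
    rw [mul_add, U.inv_mul]; abel
  obtain ⟨r, hr⟩ := exists_mul_one_sub_eq_one_of_mem_gradedJacobson
    (Ideal.mul_mem_left _ (↑U⁻¹ : R) ha)
    (hsub ▸ neg_mem (SetLike.mul_mem_graded (Units.inv_mem_graded 𝒜 hui) hnj))
  have : Subsingleton R := hn.subsingleton_of_mul_eq_one (w := -(r * ↑U⁻¹)) (by
    rw [← hr, hsub]; noncomm_ring)
  exact ⟨1, Subsingleton.elim _ _⟩

/-- If `R` is a `G`-graded nil-good ring with finite support, then the graded
Jacobson radical is a graded-nil ideal: all its homogeneous elements are nilpotent. -/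
theorem stmt9 {G R : Type*} [AddGroup G] [DecidableEq G] [Ring R]
    (𝒜 : G → AddSubgroup R) [GradedRing 𝒜]
    (hfin : {g : G | 𝒜 g ≠ ⊥}.Finite)
    (hR : IsGradedNilGood 𝒜) :
    ∀ a ∈ gradedJacobson 𝒜, (∃ g, a ∈ 𝒜 g) → IsNilpotent a :=
  stmt9_general 𝒜 hR
end

section
/- Let R be a commutative G-graded nil-good ring. Then the graded Jacobson radical J^g(R) is a graded-nil ideal. -/
/- In a commutative ring a unit plus a nilpotent is a unit, so graded nil-goodness makes every
homogeneous element a unit or nilpotent; and a unit lies in no proper ideal, in particular not in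
`J^g(R)`, which is proper because Zorn's lemma provides a graded-maximal ideal. -/

theorem exists_isGradedMaximal_ge {G R : Type*} [AddGroup G] [DecidableEq G] [Ring R]
    (𝒜 : G → AddSubgroup R) [GradedRing 𝒜] {I : Ideal R} (hI : I.IsHomogeneous 𝒜)
    (hI_ne_top : I ≠ ⊤) : ∃ M, IsGradedMaximal 𝒜 M ∧ I ≤ M := by
  obtain ⟨M, hIM, hM⟩ := zorn_le_nonempty₀ {J : Ideal R | J.IsHomogeneous 𝒜 ∧ J ≠ ⊤}
    (fun c hc hc_chain J hJ => ⟨sSup c,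
      ⟨sSup_eq_iSup (s := c) ▸ Ideal.IsHomogeneous.iSup₂ fun K hK => (hc hK).1,
        -- `⊤ = span {1}` is compact, so a directed supremum of proper ideals is proper
        (CompleteLattice.IsCompactElement.directed_sSup_lt_of_lt Ideal.isCompactElement_top
          ⟨J, hJ⟩ hc_chain.directedOn fun K hK => lt_top_iff_ne_top.2 (hc hK).2).ne⟩,
      fun _ => le_sSup⟩)
    I ⟨hI, hI_ne_top⟩
  exact ⟨M, ⟨hM.prop.1, hM.prop.2, fun J hJ hJ_ne_top hMJ =>
    (hM.le_of_ge ⟨hJ, hJ_ne_top⟩ hMJ).antisymm hMJ⟩, hIM⟩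

theorem gradedJacobson_ne_top {G R : Type*} [AddGroup G] [DecidableEq G] [Ring R]
    (𝒜 : G → AddSubgroup R) [GradedRing 𝒜] [Nontrivial R] : gradedJacobson 𝒜 ≠ ⊤ := by
  obtain ⟨M, hM, -⟩ := exists_isGradedMaximal_ge 𝒜 (Ideal.IsHomogeneous.bot 𝒜) bot_ne_top
  exact ne_top_of_le_ne_top hM.2.1 (sInf_le hM)

theorem IsGradedNilGood.isNilpotent_or_isUnit {G R : Type*} [CommRing R]
    {𝒜 : G → AddSubgroup R} (h𝒜 : IsGradedNilGood 𝒜) {a : R} (ha : ∃ g, a ∈ 𝒜 g) :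
    IsNilpotent a ∨ IsUnit a := by
  obtain ha_nil | ⟨u, n, hu, -, hn, -, rfl⟩ := h𝒜 a ha
  · exact .inl ha_nil
  · exact .inr (hn.isUnit_add_left_of_commute hu (Commute.all n u))

/-- If `R` is a commutative `G`-graded nil-good ring, then the graded Jacobson
radical is a graded-nil ideal: all its homogeneous elements are nilpotent. -/
theorem stmt10 {G R : Type*} [AddGroup G] [DecidableEq G] [CommRing R]
    (𝒜 : G → AddSubgroup R) [GradedRing 𝒜]
    (hR : IsGradedNilGood 𝒜) :
    ∀ a ∈ gradedJacobson 𝒜, (∃ g, a ∈ 𝒜 g) → IsNilpotent a := by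
  intro a ha ha_hom
  nontriviality R
  exact (hR.isNilpotent_or_isUnit ha_hom).resolve_right fun ha_unit =>
    gradedJacobson_ne_top 𝒜 (Ideal.eq_top_of_isUnit_mem _ ha ha_unit)
end

section
/- Let A be a G-graded ring, E a G-graded A-module, and R = A ⋉ E the trivial ring extension with grading R_g = A_g ⊕ E_g. Then A is graded nil-good if and only if R is graded nil-good. -/
/-- The `g`-component `A_g ⊕ E_g` of the trivial ring extension `A ⋉ E`. -/
def gradeTE {G A E : Type*} [Ring A] [AddCommGroup E] [Module A E] [Module Aᵐᵒᵖ E]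
    (𝒜 : G → AddSubgroup A) (ℰ : G → AddSubgroup E) (g : G) :
    AddSubgroup (TrivSqZeroExt A E) where
  carrier := {x | x.fst ∈ 𝒜 g ∧ x.snd ∈ ℰ g}
  add_mem' := fun hx hy =>
    ⟨by rw [TrivSqZeroExt.fst_add]; exact add_mem hx.1 hy.1,
     by rw [TrivSqZeroExt.snd_add]; exact add_mem hx.2 hy.2⟩
  zero_mem' :=
    ⟨by rw [TrivSqZeroExt.fst_zero]; exact zero_mem _,
     by rw [TrivSqZeroExt.snd_zero]; exact zero_mem _⟩
  neg_mem' := fun hx =>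
    ⟨by rw [TrivSqZeroExt.fst_neg]; exact neg_mem hx.1,
     by rw [TrivSqZeroExt.snd_neg]; exact neg_mem hx.2⟩

open DirectSum TrivSqZeroExt

theorem DirectSum.mem_of_eq_add_of_ne_zero {ι M σ : Type*} [DecidableEq ι] [AddCommGroup M]
    [SetLike σ M] [AddSubgroupClass σ M] (ℳ : ι → σ) [Decomposition ℳ] {a u n : M}
    {g i j : ι} (ha : a ∈ ℳ g) (hu : u ∈ ℳ i) (hn : n ∈ ℳ j) (ha₀ : a ≠ 0) (hu₀ : u ≠ 0)
    (h : a = u + n) : u ∈ ℳ g ∧ n ∈ ℳ g := by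
  have hig : i = g := by
    by_cases hji : j = i
    · subst hji
      exact degree_eq_of_mem_mem ℳ (h ▸ add_mem hu hn) ha ha₀
    · by_contra hig
      -- the degree-`i` component of `a` is `0`, that of `u + n` is `u`
      have hi := congrArg (fun x => (decompose ℳ x i : M)) h
      simp only [decompose_add, add_apply, AddMemClass.coe_add, decompose_of_mem_same ℳ hu,
        decompose_of_mem_ne ℳ hn hji, decompose_of_mem_ne ℳ ha (Ne.symm hig), add_zero] at hi
      exact hu₀ hi.symm
  subst hig
  exact ⟨hu, eq_sub_of_add_eq' h.symm ▸ sub_mem ha hu⟩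

theorem IsGradedNilGood.isNilpotent_or_exists_of_mem {G A : Type*} [DecidableEq G] [Ring A]
    {𝒜 : G → AddSubgroup A} [Decomposition 𝒜] (h𝒜 : IsGradedNilGood 𝒜) {a : A} {g : G}
    (ha : a ∈ 𝒜 g) :
    IsNilpotent a ∨ ∃ u n : A, IsUnit u ∧ u ∈ 𝒜 g ∧ IsNilpotent n ∧ n ∈ 𝒜 g ∧ a = u + n := by
  rcases h𝒜 a ⟨g, ha⟩ with hnil | ⟨u, n, hu, ⟨i, hui⟩, hn, ⟨j, hnj⟩, rfl⟩
  · exact .inl hnil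
  by_cases ha₀ : u + n = 0
  · exact .inl (ha₀ ▸ IsNilpotent.zero)
  by_cases hu₀ : u = 0
  · exact .inl (by rwa [hu₀, zero_add])
  obtain ⟨hug, hng⟩ := mem_of_eq_add_of_ne_zero 𝒜 ha hui hnj ha₀ hu₀ rfl
  exact .inr ⟨u, n, hu, hug, hn, hng, rfl⟩

section TrivSqZeroExt

variable {G A E : Type*} [Ring A] [AddCommGroup E] [Module A E] [Module Aᵐᵒᵖ E]
  {𝒜 : G → AddSubgroup A} {ℰ : G → AddSubgroup E}

theorem inl_mem_gradeTE {a : A} {g : G} (ha : a ∈ 𝒜 g) :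
    (inl a : TrivSqZeroExt A E) ∈ gradeTE 𝒜 ℰ g :=
  ⟨ha, zero_mem _⟩

/-- `(a, e) = (u, 0) + (n, e)`, and `(n, e)` is nilpotent because `n` is. -/
theorem IsGradedNilGood.trivSqZeroExt [SMulCommClass A Aᵐᵒᵖ E] [DecidableEq G]
    [Decomposition 𝒜] (h𝒜 : IsGradedNilGood 𝒜) : IsGradedNilGood (gradeTE 𝒜 ℰ) := by
  rintro x ⟨g, hxa, hxe⟩
  rcases h𝒜.isNilpotent_or_exists_of_mem hxa with hnil | ⟨u, n, hu, hug, hn, hng, hx⟩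
  · exact .inl (isNilpotent_iff_isNilpotent_fst.mpr hnil)
  refine .inr ⟨inl u, inl n + inr x.snd, isUnit_inl_iff.mpr hu, ⟨g, inl_mem_gradeTE hug⟩,
    isNilpotent_iff_isNilpotent_fst.mpr (by simpa using hn), ⟨g, ?_⟩, ?_⟩
  · exact add_mem (inl_mem_gradeTE hng) ⟨zero_mem _, by simpa using hxe⟩
  · ext <;> simp [hx]

theorem IsGradedNilGood.of_trivSqZeroExt [SMulCommClass A Aᵐᵒᵖ E]
    (hR : IsGradedNilGood (gradeTE 𝒜 ℰ)) : IsGradedNilGood 𝒜 := by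
  rintro a ⟨g, ha⟩
  rcases hR (inl a) ⟨g, inl_mem_gradeTE ha⟩ with hnil | ⟨u, n, hu, ⟨i, hui⟩, hn, ⟨j, hnj⟩, h⟩
  · exact .inl ((isNilpotent_inl_iff a).mp hnil)
  exact .inr ⟨u.fst, n.fst, isUnit_iff_isUnit_fst.mp hu, ⟨i, hui.1⟩,
    isNilpotent_iff_isNilpotent_fst.mp hn, ⟨j, hnj.1⟩, by simpa using congrArg fst h⟩

end TrivSqZeroExt

theorem stmt13_general {G A E : Type*} [AddGroup G] [DecidableEq G] [Ring A] [AddCommGroup E]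
    [Module A E] [Module Aᵐᵒᵖ E] [SMulCommClass A Aᵐᵒᵖ E]
    (𝒜 : G → AddSubgroup A) [GradedRing 𝒜]
    (ℰ : G → AddSubgroup E) :
    IsGradedNilGood 𝒜 ↔ IsGradedNilGood (gradeTE 𝒜 ℰ) :=
  ⟨IsGradedNilGood.trivSqZeroExt, IsGradedNilGood.of_trivSqZeroExt⟩

/-- Let `A` be a `G`-graded ring, `E` a `G`-graded `A`-module and `R = A ⋉ E` the
trivial ring extension with grading `R_g = A_g ⊕ E_g`. Then `A` is graded nil-good
if and only if `R` is graded nil-good. -/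
theorem stmt13 {G A E : Type*} [AddGroup G] [DecidableEq G] [Ring A] [AddCommGroup E]
    [Module A E] [Module Aᵐᵒᵖ E] [SMulCommClass A Aᵐᵒᵖ E]
    (𝒜 : G → AddSubgroup A) [GradedRing 𝒜]
    (ℰ : G → AddSubgroup E) [DirectSum.Decomposition ℰ]
    (hsmul : ∀ g h : G, ∀ a ∈ 𝒜 g, ∀ x ∈ ℰ h, a • x ∈ ℰ (g + h))
    (hsmulop : ∀ g h : G, ∀ a ∈ 𝒜 g, ∀ x ∈ ℰ h,
      MulOpposite.op a • x ∈ ℰ (h + g)) :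
    IsGradedNilGood 𝒜 ↔ IsGradedNilGood (gradeTE 𝒜 ℰ) :=
  stmt13_general 𝒜 ℰ
end

section
/- Let A be a ring and E an A-bimodule (or A-module with A commutative), and R = A ⋉ E the trivial ring extension. Then R is nil-good if and only if A is nil-good. -/
/-!
The projection `A ⋉ E → A` is a surjective ring map that reflects units and nilpotents.
Nil-goodness passes to quotients along any surjective ring map, and it lifts back along
one that reflects units and nilpotents: write `f x = u + n`, lift `u` to `u'`, and put
`x = u' + (x - u')`.
-/

namespace IsNilGood

variable {R S F : Type*} [Ring R] [Ring S] [FunLike F R S] [RingHomClass F R S]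

theorem of_surjective (f : F) (hf : Function.Surjective f) (h : IsNilGood R) :
    IsNilGood S := by
  intro b
  obtain ⟨a, rfl⟩ := hf b
  rcases h a with hn | ⟨u, n, hu, hn, rfl⟩
  · exact .inl (hn.map f)
  · exact .inr ⟨f u, f n, hu.map f, hn.map f, map_add f u n⟩

theorem of_surjective_of_isNilpotent_map (f : F) [IsLocalHom f] (hf : Function.Surjective f)
    (hnil : ∀ x, IsNilpotent (f x) → IsNilpotent x) (h : IsNilGood S) : IsNilGood R := by
  intro x
  rcases h (f x) with hn | ⟨u, n, hu, hn, hx⟩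
  · exact .inl (hnil x hn)
  · obtain ⟨u', rfl⟩ := hf u
    have hn' : f (x - u') = n := by rw [map_sub, hx, add_sub_cancel_left]
    exact .inr ⟨u', x - u', isUnit_of_map_unit f u' hu, hnil _ (hn' ▸ hn),
      (add_sub_cancel u' x).symm⟩

end IsNilGood

namespace TrivSqZeroExt

instance isLocalHom_fstHom {S A E : Type*} [CommSemiring S] [Semiring A] [AddCommGroup E]
    [Algebra S A] [Module S E] [Module A E] [Module Aᵐᵒᵖ E] [SMulCommClass A Aᵐᵒᵖ E]
    [IsScalarTower S A E] [IsScalarTower S Aᵐᵒᵖ E] : IsLocalHom (fstHom S A E) :=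
  ⟨fun _ => isUnit_iff_isUnit_fst.mpr⟩

end TrivSqZeroExt

/-- The trivial ring extension `R = A ⋉ E` is nil-good if and only if `A` is
nil-good. -/
theorem stmt14 {A E : Type*} [Ring A] [AddCommGroup E]
    [Module A E] [Module Aᵐᵒᵖ E] [SMulCommClass A Aᵐᵒᵖ E] :
    IsNilGood (TrivSqZeroExt A E) ↔ IsNilGood A :=
  let π := TrivSqZeroExt.fstHom ℕ A E
  ⟨IsNilGood.of_surjective π TrivSqZeroExt.fst_surjective,
    IsNilGood.of_surjective_of_isNilpotent_map π TrivSqZeroExt.fst_surjective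
      fun _ => TrivSqZeroExt.isNilpotent_iff_isNilpotent_fst.mpr⟩
end

section
/- Let R = ⊕_{g∈G} R_g be a G-graded ring in which every unit and every nilpotent element of R is homogeneous. If the group ring R[G] (with its natural G-grading) is graded nil-good, then R is graded nil-good. -/
/-- The `g`-component `Σ_{h ∈ G} R_{g - h}·h` of the natural `G`-grading of the
group ring `R[G]`. -/
def groupRingGrade {G R : Type*} [AddCommGroup G] [Ring R] (𝒜 : G → AddSubgroup R)
    (g : G) : AddSubgroup (AddMonoidAlgebra R G) where
  carrier := {x | ∀ h : G, x.coeff h ∈ 𝒜 (g - h)}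
  add_mem' := fun hx hy h => by
    rw [AddMonoidAlgebra.coeff_add, Finsupp.add_apply]; exact add_mem (hx h) (hy h)
  zero_mem' := fun h => by
    rw [AddMonoidAlgebra.coeff_zero, Finsupp.zero_apply]; exact zero_mem _
  neg_mem' := fun hx h => by
    rw [AddMonoidAlgebra.coeff_neg, Finsupp.neg_apply]; exact neg_mem (hx h)

/-!
The augmentation `ε : R[G] → R`, `Σ r_h h ↦ Σ r_h`, is a ring homomorphism sending the
homogeneous element `a·0` of `R[G]` back to `a`. Applying `ε` to a decomposition
`a·0 = u + n` in `R[G]` gives `a = ε u + ε n`, a unit plus a nilpotent, and both summands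
are homogeneous because every unit and every nilpotent of `R` is.
-/

namespace AddMonoidAlgebra

variable (R G : Type*) [Semiring R] [AddMonoid G]

noncomputable def augmentation : AddMonoidAlgebra R G →+* R :=
  liftNCRingHom (RingHom.id R) 1 fun _ _ => Commute.one_right _

variable {R G}

@[simp]
theorem augmentation_single (g : G) (r : R) : augmentation R G (single g r) = r := by
  simp [augmentation, liftNCRingHom, liftNC_single]

end AddMonoidAlgebra

theorem single_zero_mem_groupRingGrade {G R : Type*} [AddCommGroup G] [Ring R]
    (𝒜 : G → AddSubgroup R) {g : G} {a : R} (ha : a ∈ 𝒜 g) :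
    AddMonoidAlgebra.single 0 a ∈ groupRingGrade 𝒜 g := by
  classical
  intro h
  rw [AddMonoidAlgebra.coeff_single, Finsupp.single_apply]
  split_ifs with h0
  · simpa [← h0] using ha
  · exact zero_mem _

theorem IsGradedNilGood.of_rightInverse {G H R S : Type*} [Ring R] [Ring S]
    {𝒜 : G → AddSubgroup R} {ℬ : H → AddSubgroup S} (hℬ : IsGradedNilGood ℬ)
    (f : S →+* R) (s : R → S) (hfs : ∀ a, f (s a) = a)
    (hs : ∀ a, (∃ g, a ∈ 𝒜 g) → ∃ h, s a ∈ ℬ h)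
    (hu : ∀ u : R, IsUnit u → ∃ g, u ∈ 𝒜 g)
    (hn : ∀ n : R, IsNilpotent n → ∃ g, n ∈ 𝒜 g) :
    IsGradedNilGood 𝒜 := by
  intro a ha
  rcases hℬ (s a) (hs a ha) with hnil | ⟨u, n, hunit, -, hnil, -, hsum⟩
  · exact .inl (hfs a ▸ hnil.map f)
  · have hfa : a = f u + f n := by rw [← hfs a, hsum, map_add]
    exact .inr ⟨f u, f n, hunit.map f, hu _ (hunit.map f), hnil.map f,
      hn _ (hnil.map f), hfa⟩

theorem stmt17_general {G R : Type*} [AddCommGroup G] [Ring R]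
    (𝒜 : G → AddSubgroup R)
    (hu : ∀ u : R, IsUnit u → ∃ g, u ∈ 𝒜 g)
    (hn : ∀ n : R, IsNilpotent n → ∃ g, n ∈ 𝒜 g)
    (h : IsGradedNilGood (groupRingGrade 𝒜)) :
    IsGradedNilGood 𝒜 :=
  h.of_rightInverse (AddMonoidAlgebra.augmentation R G) (AddMonoidAlgebra.single 0)
    (AddMonoidAlgebra.augmentation_single 0)
    (fun _ ⟨g, ha⟩ => ⟨g, single_zero_mem_groupRingGrade 𝒜 ha⟩) hu hn

/-- Let `R` be a `G`-graded ring in which every unit and every nilpotent element of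
`R` is homogeneous. If the group ring `R[G]`, with its natural `G`-grading, is
graded nil-good, then `R` is graded nil-good. -/
theorem stmt17 {G R : Type*} [AddCommGroup G] [DecidableEq G] [Ring R]
    (𝒜 : G → AddSubgroup R) [GradedRing 𝒜]
    (hu : ∀ u : R, IsUnit u → ∃ g, u ∈ 𝒜 g)
    (hn : ∀ n : R, IsNilpotent n → ∃ g, n ∈ 𝒜 g)
    (h : IsGradedNilGood (groupRingGrade 𝒜)) :
    IsGradedNilGood 𝒜 :=
  stmt17_general 𝒜 hu hn h
end
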